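/- σ(G) = 2 if and only if G is bipartite with at least one edge. Moreover σ(G) = 3 if and only if 3 ≤ χ(G) ≤ 4. -/

import Mathlib

open SimpleGraph

/-- An orientation of `G`, given as a relation `o` where `o u v` means the
edge `uv` is directed from `u` to `v`: on each edge exactly one direction holds. -/
def IsOrientation {V : Type*} (G : SimpleGraph V) (o : V → V → Prop) : Prop :=
  ∀ u v, G.Adj u v → (o u v ↔ ¬ o v u)

/-- An orientation covering of `G`: a family of orientations such that for every
vertex `v` and edges `vu`, `vw` incident to `v`, some orientation directs both out of `v`. -/
def IsOrientationCover {V : Type*} (G : SimpleGraph V) {k : ℕ}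
    (F : Fin k → (V → V → Prop)) : Prop :=
  (∀ i, IsOrientation G (F i)) ∧
    ∀ v u w, G.Adj v u → G.Adj v w → ∃ i, F i v u ∧ F i v w

/-- The orientation covering number `σ(G)`. -/
noncomputable def orientCoverNum {V : Type*} (G : SimpleGraph V) : ℕ :=
  sInf {k | ∃ F : Fin k → (V → V → Prop), IsOrientationCover G F}

/-- An elbow covering of `G`: a family of orientations such that no path `u,v,w`
is a directed path in every orientation. -/
def IsElbowCover {V : Type*} (G : SimpleGraph V) {k : ℕ}
    (F : Fin k → (V → V → Prop)) : Prop :=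
  (∀ i, IsOrientation G (F i)) ∧
    ∀ u v w, G.Adj u v → G.Adj v w → u ≠ w → ∃ i, ¬ (F i u v ∧ F i v w)

/-- The elbow number `elb(G)`. -/
noncomputable def elbowNum {V : Type*} (G : SimpleGraph V) : ℕ :=
  sInf {k | ∃ F : Fin k → (V → V → Prop), IsElbowCover G F}

/-- A graph is an equivalence graph if it is a disjoint union of cliques,
equivalently its adjacency relation is transitive where defined. -/
def IsEquivalenceGraph {V : Type*} (H : SimpleGraph V) : Prop :=
  ∀ u v w, H.Adj u v → H.Adj v w → u ≠ w → H.Adj u w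

/-- An equivalence covering of `G`: equivalence subgraphs covering all edges. -/
def IsEquivCover {V : Type*} (G : SimpleGraph V) {k : ℕ}
    (F : Fin k → SimpleGraph V) : Prop :=
  (∀ i, F i ≤ G ∧ IsEquivalenceGraph (F i)) ∧
    ∀ u v, G.Adj u v → ∃ i, (F i).Adj u v

/-- The equivalence number `eq(G)`. -/
noncomputable def equivNum {V : Type*} (G : SimpleGraph V) : ℕ :=
  sInf {k | ∃ F : Fin k → SimpleGraph V, IsEquivCover G F}

/-! For a cover `F` and an edge `uv`, the orientations directing `uv` out of `u` and those
directing it out of `v` partition the index set into two nonempty parts. If only one orientation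
`i` directs `uv` out of `u`, then `u` is a source of `F i`, because `uv` and any other edge at `u`
are directed out of `u` together somewhere. With two orientations every vertex is thus a source of
one of them, and colouring it by that index is proper; with three, every edge has an endpoint that
is a source of some orientation, so the remaining vertices are independent and share a fourth
colour. Conversely, covers pull back along homomorphisms, and `K₂`, resp. `K₄`, is covered by two,
resp. three, orientations: orientation `i` makes vertex `i` a source and directs every other edge
towards its smaller end. -/

open Finset

section

variable {V W : Type*} {G : SimpleGraph V} {k : ℕ}

def IsSourceIn (G : SimpleGraph V) (o : V → V → Prop) (v : V) : Prop :=
  ∀ u, G.Adj v u → o v u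

lemma IsOrientation.not_isSourceIn_of_adj {o : V → V → Prop} (ho : IsOrientation G o)
    {u v : V} (huv : G.Adj u v) (hu : IsSourceIn G o u) : ¬ IsSourceIn G o v :=
  fun hv => (ho u v huv).mp (hu v huv) (hv u huv.symm)

lemma IsOrientationCover.comap {H : SimpleGraph W} {F : Fin k → W → W → Prop}
    (hF : IsOrientationCover H F) (f : G →g H) :
    IsOrientationCover G (fun i u v => F i (f u) (f v)) :=
  ⟨fun i _ _ huv => hF.1 i _ _ (f.map_rel huv),
    fun _ _ _ hvu hvw => hF.2 _ _ _ (f.map_rel hvu) (f.map_rel hvw)⟩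

lemma isOrientationCover_of_eq_bot (hG : G = ⊥) :
    IsOrientationCover G (fun (_ : Fin k) (_ _ : V) => False) := by
  subst hG
  exact ⟨fun _ _ _ h => h.elim, fun _ _ _ h => h.elim⟩

lemma IsOrientationCover.two_le_of_adj {F : Fin k → V → V → Prop} (hF : IsOrientationCover G F)
    {u v : V} (huv : G.Adj u v) : 2 ≤ k := by
  obtain ⟨i, hi, -⟩ := hF.2 u v v huv huv
  obtain ⟨j, hj, -⟩ := hF.2 v u u huv.symm huv.symm
  have hij : i ≠ j := by
    rintro rfl
    exact (hF.1 i u v huv).mp hi hj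
  by_contra! hk
  exact hij (Fin.ext (by omega))

lemma exists_isOrientationCover_iff_eq_bot (hk : k ≤ 1) :
    (∃ F : Fin k → V → V → Prop, IsOrientationCover G F) ↔ G = ⊥ := by
  refine ⟨fun ⟨F, hF⟩ => ?_, fun hG => ⟨_, isOrientationCover_of_eq_bot hG⟩⟩
  by_contra hG
  obtain ⟨u, v, huv⟩ := ne_bot_iff_exists_adj.mp hG
  have := hF.two_le_of_adj huv
  omega

lemma colorable_of_forall_exists_isSourceIn {F : Fin k → V → V → Prop}
    (hF : ∀ i, IsOrientation G (F i)) (h : ∀ v, ∃ i, IsSourceIn G (F i) v) :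
    G.Colorable k :=
  ⟨.mk (fun v => (h v).choose) fun huv hc =>
    (hF _).not_isSourceIn_of_adj huv (h _).choose_spec (hc ▸ (h _).choose_spec)⟩

lemma colorable_succ_of_adj_exists_isSourceIn {F : Fin k → V → V → Prop}
    (hF : ∀ i, IsOrientation G (F i))
    (h : ∀ u v, G.Adj u v → (∃ i, IsSourceIn G (F i) u) ∨ ∃ i, IsSourceIn G (F i) v) :
    G.Colorable (k + 1) := by
  classical
  have hc : G.Coloring (Option (Fin k)) := .mk
    (fun v => if hv : ∃ i, IsSourceIn G (F i) v then some hv.choose else none) fun {u v} huv => by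
      by_cases hu : ∃ i, IsSourceIn G (F i) u <;> by_cases hv : ∃ i, IsSourceIn G (F i) v <;>
        simp only [hu, hv, dite_true, dite_false, ne_eq, Option.some_inj, reduceCtorEq,
          not_false_eq_true, not_true_eq_false]
      · exact fun he => (hF _).not_isSourceIn_of_adj huv hu.choose_spec (he ▸ hv.choose_spec)
      · exact (h u v huv).elim hu hv
  simpa using hc.colorable

namespace IsOrientationCover

variable {F : Fin k → V → V → Prop}

lemma exists_out (hF : IsOrientationCover G F) {u v : V} (huv : G.Adj u v) : ∃ i, F i u v :=
  (hF.2 u v v huv huv).imp fun _ => And.left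

open Classical in
lemma card_out_add_card_out (hF : IsOrientationCover G F) {u v : V} (huv : G.Adj u v) :
    #{i | F i u v} + #{i | F i v u} = k := by
  simpa [(hF.1 _ v u huv.symm)] using card_filter_add_card_filter_not
    (s := univ) (fun i => F i u v)

open Classical in
lemma exists_isSourceIn_of_card_out_le_one (hF : IsOrientationCover G F) {u v : V}
    (huv : G.Adj u v) (h : #{i | F i u v} ≤ 1) : ∃ i, IsSourceIn G (F i) u := by
  obtain ⟨i, hi⟩ := hF.exists_out huv
  refine ⟨i, fun w huw => ?_⟩
  obtain ⟨j, hjv, hjw⟩ := hF.2 u v w huv huw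
  rwa [card_le_one.mp h j (by simpa using hjv) i (by simpa using hi)] at hjw

end IsOrientationCover

lemma IsOrientationCover.colorable_two {F : Fin 2 → V → V → Prop}
    (hF : IsOrientationCover G F) : G.Colorable 2 := by
  classical
  refine colorable_of_forall_exists_isSourceIn hF.1 fun v => ?_
  by_cases hv : ∃ x, G.Adj v x
  · obtain ⟨x, hvx⟩ := hv
    obtain ⟨j, hj⟩ := hF.exists_out hvx.symm
    have : 0 < #{i | F i x v} := card_pos.mpr ⟨j, by simpa using hj⟩
    have := hF.card_out_add_card_out hvx
    exact hF.exists_isSourceIn_of_card_out_le_one hvx (by omega)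
  · exact ⟨0, fun x hvx => (hv ⟨x, hvx⟩).elim⟩

lemma IsOrientationCover.colorable_four {F : Fin 3 → V → V → Prop}
    (hF : IsOrientationCover G F) : G.Colorable 4 := by
  classical
  refine colorable_succ_of_adj_exists_isSourceIn hF.1 fun u v huv => ?_
  have := hF.card_out_add_card_out huv
  by_cases h : #{i | F i u v} ≤ 1
  · exact .inl (hF.exists_isSourceIn_of_card_out_le_one huv h)
  · exact .inr (hF.exists_isSourceIn_of_card_out_le_one huv.symm (by omega))

def sourceOrientation {n : ℕ} (a u v : Fin n) : Prop :=
  u = a ∨ (v ≠ a ∧ v < u)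

lemma isOrientation_sourceOrientation {n : ℕ} (a : Fin n) :
    IsOrientation (⊤ : SimpleGraph (Fin n)) (sourceOrientation a) := by
  intro u v huv
  simp only [sourceOrientation]
  grind [SimpleGraph.top_adj]

lemma isOrientationCover_top_sourceOrientation (n : ℕ) :
    IsOrientationCover (⊤ : SimpleGraph (Fin n)) sourceOrientation :=
  ⟨isOrientation_sourceOrientation, fun v _ _ _ _ => ⟨v, .inl rfl, .inl rfl⟩⟩

lemma isOrientationCover_top_succ {k : ℕ} (hk : 3 ≤ k) :
    IsOrientationCover (⊤ : SimpleGraph (Fin (k + 1)))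
      (fun i : Fin k => sourceOrientation i.castSucc) := by
  classical
  refine ⟨fun i => isOrientation_sourceOrientation _, fun v u w hvu hvw => ?_⟩
  obtain ⟨i, rfl⟩ | rfl := Fin.eq_castSucc_or_eq_last v
  · exact ⟨i, .inl rfl, .inl rfl⟩
  · obtain ⟨_, hi, hiuw⟩ := exists_mem_notMem_of_card_lt_card
      (s := {u, w}) (t := univ.map Fin.castSuccEmb) (by grind [card_le_two, card_map, card_fin])
    obtain ⟨i, -, rfl⟩ := mem_map.mp hi
    simp only [mem_insert, mem_singleton, not_or, Fin.coe_castSuccEmb] at hiuw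
    simp only [SimpleGraph.top_adj] at hvu hvw
    exact ⟨i, .inr ⟨Ne.symm hiuw.1, Fin.lt_last_iff_ne_last.mpr hvu.symm⟩,
      .inr ⟨Ne.symm hiuw.2, Fin.lt_last_iff_ne_last.mpr hvw.symm⟩⟩

lemma exists_isOrientationCover_two_iff :
    (∃ F : Fin 2 → V → V → Prop, IsOrientationCover G F) ↔ G.Colorable 2 :=
  ⟨fun ⟨_, hF⟩ => hF.colorable_two,
    fun ⟨c⟩ => ⟨_, (isOrientationCover_top_sourceOrientation 2).comap c⟩⟩

lemma exists_isOrientationCover_three_iff :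
    (∃ F : Fin 3 → V → V → Prop, IsOrientationCover G F) ↔ G.Colorable 4 :=
  ⟨fun ⟨_, hF⟩ => hF.colorable_four,
    fun ⟨c⟩ => ⟨_, (isOrientationCover_top_succ le_rfl).comap c⟩⟩

lemma orientCoverNum_eq_iff {n : ℕ} (hn : n ≠ 0) :
    orientCoverNum G = n ↔ (∃ F : Fin n → V → V → Prop, IsOrientationCover G F) ∧
      ∀ m < n, ¬ ∃ F : Fin m → V → V → Prop, IsOrientationCover G F := by
  refine ⟨fun h => ?_, fun ⟨hn, hlt⟩ => le_antisymm (Nat.sInf_le hn) ?_⟩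
  · have hne := Nat.nonempty_of_pos_sInf (h ▸ Nat.pos_of_ne_zero hn)
    exact ⟨h ▸ Nat.sInf_mem hne, fun m hm => Nat.notMem_of_lt_sInf (h ▸ hm)⟩
  · exact le_csInf ⟨n, hn⟩ fun m hm => not_lt.mp fun h => hlt m h hm

end

theorem stmt16_general {V : Type*} (G : SimpleGraph V) :
    (orientCoverNum G = 2 ↔ (G.Colorable 2 ∧ G.edgeSet.Nonempty)) ∧
    (orientCoverNum G = 3 ↔ (3 ≤ G.chromaticNumber ∧ G.chromaticNumber ≤ 4)) := by
  have h3 : 3 ≤ G.chromaticNumber ↔ ¬ G.Colorable 2 := by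
    rw [← chromaticNumber_le_iff_colorable, not_le, Nat.cast_ofNat]
    exact ENat.add_one_le_iff (ENat.ofNat_ne_top 2)
  have h4 : G.chromaticNumber ≤ 4 ↔ G.Colorable 4 := chromaticNumber_le_iff_colorable
  have hbot : G = ⊥ → G.Colorable 2 := fun h => (colorable_one_iff.mpr h).mono one_le_two
  rw [orientCoverNum_eq_iff two_ne_zero, orientCoverNum_eq_iff three_ne_zero, h3, h4,
    edgeSet_nonempty]
  simp only [Nat.forall_lt_succ_right, Nat.not_lt_zero, exists_isOrientationCover_two_iff,
    exists_isOrientationCover_iff_eq_bot zero_le_one, exists_isOrientationCover_iff_eq_bot le_rfl,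
    exists_isOrientationCover_three_iff]
  tauto

/-- `σ(G) = 2` iff `G` is bipartite with an edge, and `σ(G) = 3`
iff `3 ≤ χ(G) ≤ 4`. -/
theorem stmt16 {V : Type*} [Fintype V] (G : SimpleGraph V) :
    (orientCoverNum G = 2 ↔ (G.Colorable 2 ∧ G.edgeSet.Nonempty)) ∧
    (orientCoverNum G = 3 ↔ (3 ≤ G.chromaticNumber ∧ G.chromaticNumber ≤ 4)) :=
  stmt16_general G
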